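/- arXiv:1307.3292 — 5 statements merged into one kernel-verified Lean document; each statement's English description precedes it below -/
import Mathlib

section
/- Let d ≥ 1, let E ⊆ ℝ^d be a finite set with at least two points, and let P_E be a 1-field on E. If F : ℝ^d → ℝ is differentiable, its gradient ∇F is Lipschitz with constant M, and F(x) = f(x), ∇F(x) = g(x) for all x ∈ E, then Γ(P_E) ≤ M; in particular, for every pair of distinct x, y ∈ E, √(A(x,y)² + B(x,y)²) + A(x,y) ≤ M. -/
open scoped RealInnerProductSpace

/-- The affine polynomial (first order jet) `P_u(z) = f(u) + ⟪g(u), z - u⟫`. -/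
noncomputable def jet {d : ℕ} (f : EuclideanSpace ℝ (Fin d) → ℝ)
    (g : EuclideanSpace ℝ (Fin d) → EuclideanSpace ℝ (Fin d))
    (u z : EuclideanSpace ℝ (Fin d)) : ℝ :=
  f u + ⟪g u, z - u⟫

/-- `A(x,y) = |P_x(x) - P_y(x) + P_x(y) - P_y(y)| / |x - y|²`. -/
noncomputable def funA {d : ℕ} (f : EuclideanSpace ℝ (Fin d) → ℝ)
    (g : EuclideanSpace ℝ (Fin d) → EuclideanSpace ℝ (Fin d))
    (x y : EuclideanSpace ℝ (Fin d)) : ℝ :=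
  |jet f g x x - jet f g y x + jet f g x y - jet f g y y| / ‖x - y‖ ^ 2

/-- `B(x,y) = ‖g(x) - g(y)‖ / |x - y|`. -/
noncomputable def funB {d : ℕ}
    (g : EuclideanSpace ℝ (Fin d) → EuclideanSpace ℝ (Fin d))
    (x y : EuclideanSpace ℝ (Fin d)) : ℝ :=
  ‖g x - g y‖ / ‖x - y‖

/-- `Ã(x,y) = |P_x(x) - P_y(x)| / |x - y|²`. -/
noncomputable def funAtilde {d : ℕ} (f : EuclideanSpace ℝ (Fin d) → ℝ)
    (g : EuclideanSpace ℝ (Fin d) → EuclideanSpace ℝ (Fin d))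
    (x y : EuclideanSpace ℝ (Fin d)) : ℝ :=
  |jet f g x x - jet f g y x| / ‖x - y‖ ^ 2

/-- `Γ(P_E)`: max over distinct pairs of `√(A² + B²) + A`. -/
noncomputable def Gamma {d : ℕ} (E : Set (EuclideanSpace ℝ (Fin d)))
    (f : EuclideanSpace ℝ (Fin d) → ℝ)
    (g : EuclideanSpace ℝ (Fin d) → EuclideanSpace ℝ (Fin d)) : ℝ :=
  sSup {t : ℝ | ∃ x ∈ E, ∃ y ∈ E, x ≠ y ∧
    t = Real.sqrt (funA f g x y ^ 2 + funB g x y ^ 2) + funA f g x y}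

/-- `Γ'(P_E)`: max over distinct pairs of `max {A, B}`. -/
noncomputable def GammaPrime {d : ℕ} (E : Set (EuclideanSpace ℝ (Fin d)))
    (f : EuclideanSpace ℝ (Fin d) → ℝ)
    (g : EuclideanSpace ℝ (Fin d) → EuclideanSpace ℝ (Fin d)) : ℝ :=
  sSup {t : ℝ | ∃ x ∈ E, ∃ y ∈ E, x ≠ y ∧ t = max (funA f g x y) (funB g x y)}

/-- `Γ̃(P_E)`: max over distinct pairs of `max {Ã, B}`. -/
noncomputable def GammaTilde {d : ℕ} (E : Set (EuclideanSpace ℝ (Fin d)))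
    (f : EuclideanSpace ℝ (Fin d) → ℝ)
    (g : EuclideanSpace ℝ (Fin d) → EuclideanSpace ℝ (Fin d)) : ℝ :=
  sSup {t : ℝ | ∃ x ∈ E, ∃ y ∈ E, x ≠ y ∧ t = max (funAtilde f g x y) (funB g x y)}

/-!
Write `N = 2 (F x - F y) + ⟪∇F x + ∇F y, y - x⟫`, so that `A = |N| / ‖x - y‖²`. A gradient that
is `M`-Lipschitz gives the two-sided Taylor bound `|F b - F a - ⟪∇F a, b - a⟫| ≤ M/2 ‖b - a‖²`.
Comparing the upper bound at `x` with the lower bound at `y`, both evaluated at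
`w = (x + y)/2 - (∇F x - ∇F y)/(2M)`, yields `‖∇F x - ∇F y‖² + 2M|N| ≤ M² ‖x - y‖²`, that is
`B² + 2MA ≤ M²`; together with `A ≤ M` this is `√(A² + B²) ≤ M - A`.
-/

open scoped NNReal

section LipschitzGradient

variable {E : Type*} [NormedAddCommGroup E] [InnerProductSpace ℝ E] [CompleteSpace E]
  {F : E → ℝ} {K : ℝ≥0}

theorem abs_sub_sub_inner_gradient_le (hF : Differentiable ℝ F)
    (hLip : LipschitzWith K (gradient F)) (a b : E) :
    |F b - F a - ⟪gradient F a, b - a⟫| ≤ K / 2 * ‖b - a‖ ^ 2 := by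
  set γ : ℝ → E := fun t => a + t • (b - a)
  have hγ : ∀ t, HasDerivAt γ (b - a) t := fun t => by
    simpa only [one_smul] using ((hasDerivAt_id' t).smul_const (b - a)).const_add a
  have hf : ∀ t, HasDerivAt (fun t => F (γ t) - F a - t * ⟪gradient F a, b - a⟫)
      (⟪gradient F (γ t) - gradient F a, b - a⟫) t := fun t => by
    refine ((((hF (γ t)).hasFDerivAt.comp_hasDerivAt t (hγ t)).sub_const (F a)).sub
      ((hasDerivAt_id' t).mul_const ⟪gradient F a, b - a⟫)).congr_deriv ?_
    simp only [one_mul, inner_sub_left, inner_gradient_left]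
  have hB : ∀ t, HasDerivAt (fun t : ℝ => K / 2 * t ^ 2 * ‖b - a‖ ^ 2) (K * t * ‖b - a‖ ^ 2) t :=
    fun t => by
      refine (((hasDerivAt_pow 2 t).const_mul (K / 2 : ℝ)).mul_const (‖b - a‖ ^ 2)).congr_deriv ?_
      simp only [Nat.cast_ofNat, Nat.add_one_sub_one, pow_one]
      ring
  have bound : ∀ t ∈ Set.Ico (0 : ℝ) 1,
      ‖⟪gradient F (γ t) - gradient F a, b - a⟫‖ ≤ K * t * ‖b - a‖ ^ 2 := by
    rintro t ⟨ht, -⟩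
    calc ‖⟪gradient F (γ t) - gradient F a, b - a⟫‖
        ≤ ‖gradient F (γ t) - gradient F a‖ * ‖b - a‖ := norm_inner_le_norm _ _
      _ ≤ K * ‖γ t - a‖ * ‖b - a‖ := by gcongr; exact hLip.norm_sub_le _ _
      _ = K * t * ‖b - a‖ ^ 2 := by
          simp only [γ, add_sub_cancel_left, norm_smul, Real.norm_of_nonneg ht]; ring
  simpa [γ] using image_norm_le_of_norm_deriv_right_le_deriv_boundary
    (fun t _ => (hf t).continuousAt.continuousWithinAt) (fun t _ => (hf t).hasDerivWithinAt)
    (by simp [γ]) hB bound (Set.right_mem_Icc.2 zero_le_one)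

theorem norm_sub_gradient_sq_le (hF : Differentiable ℝ F)
    (hLip : LipschitzWith K (gradient F)) (x y : E) :
    ‖gradient F x - gradient F y‖ ^ 2 ≤ K ^ 2 * ‖x - y‖ ^ 2
      + 2 * K * (2 * (F x - F y) + ⟪gradient F x + gradient F y, y - x⟫) := by
  set δ := gradient F x - gradient F y
  rcases eq_zero_or_pos K with hK | hK
  · have hδ : ‖δ‖ ≤ 0 := by simpa [hK] using hLip.norm_sub_le x y
    simp [hK, le_antisymm hδ (norm_nonneg δ)]
  obtain ⟨s, hs⟩ : ∃ s : ℝ, 2 * K * s = 1 := ⟨(2 * K)⁻¹, mul_inv_cancel₀ (by positivity)⟩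
  set w : E := (1 / 2 : ℝ) • (x + y) - s • δ
  have hwx : w - x = -((1 / 2 : ℝ) • (x - y) + s • δ) := by
    simp only [w]; module
  have hwy : w - y = (1 / 2 : ℝ) • (x - y) - s • δ := by
    simp only [w]; module
  have hinner : ⟪gradient F x, w - x⟫ - ⟪gradient F y, w - y⟫
      = -(1 / 2) * ⟪gradient F x + gradient F y, x - y⟫ - s * ‖δ‖ ^ 2 := by
    rw [hwx, hwy, ← real_inner_self_eq_norm_sq]
    simp only [δ, inner_neg_right, inner_add_left, inner_add_right, inner_sub_left,
      inner_sub_right, real_inner_smul_right]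
    ring
  have hnorm : ‖w - x‖ ^ 2 + ‖w - y‖ ^ 2 = 1 / 2 * ‖x - y‖ ^ 2 + 2 * s ^ 2 * ‖δ‖ ^ 2 := by
    rw [hwx, hwy, norm_neg]
    simp only [← real_inner_self_eq_norm_sq, inner_add_left, inner_add_right, inner_sub_left,
      inner_sub_right, real_inner_smul_left, real_inner_smul_right]
    ring
  have hx := (abs_le.1 (abs_sub_sub_inner_gradient_le hF hLip x w)).2
  have hy := (abs_le.1 (abs_sub_sub_inner_gradient_le hF hLip y w)).1
  have hyx : ⟪gradient F x + gradient F y, y - x⟫ = -⟪gradient F x + gradient F y, x - y⟫ := by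
    rw [← inner_neg_right, neg_sub]
  have hQ : 0 ≤ F x - F y + (⟪gradient F x, w - x⟫ - ⟪gradient F y, w - y⟫)
      + K / 2 * (‖w - x‖ ^ 2 + ‖w - y‖ ^ 2) := by linarith
  rw [hinner, hnorm] at hQ
  rw [hyx]
  -- `4K` times `hQ` differs from the goal by `‖δ‖² (1 - 2Ks)²`, which vanishes by the choice of `s`.
  linear_combination (4 * (K : ℝ)) * hQ + ‖δ‖ ^ 2 * (2 * K * s - 1) * hs

theorem abs_two_mul_sub_add_inner_le (hF : Differentiable ℝ F)
    (hLip : LipschitzWith K (gradient F)) (x y : E) :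
    |2 * (F x - F y) + ⟪gradient F x + gradient F y, y - x⟫| ≤ K * ‖x - y‖ ^ 2 := by
  have hx := abs_le.1 (abs_sub_sub_inner_gradient_le hF hLip x y)
  have hy := abs_le.1 (abs_sub_sub_inner_gradient_le hF hLip y x)
  have hyx : ⟪gradient F y, y - x⟫ = -⟪gradient F y, x - y⟫ := by rw [← inner_neg_right, neg_sub]
  rw [norm_sub_rev y x, inner_add_left, hyx] at *
  exact abs_le.2 ⟨by linarith [hx.1, hy.1], by linarith [hx.2, hy.2]⟩

theorem norm_sub_gradient_sq_add_abs_le (hF : Differentiable ℝ F)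
    (hLip : LipschitzWith K (gradient F)) (x y : E) :
    ‖gradient F x - gradient F y‖ ^ 2
      + 2 * K * |2 * (F x - F y) + ⟪gradient F x + gradient F y, y - x⟫| ≤ K ^ 2 * ‖x - y‖ ^ 2 := by
  have hxy := norm_sub_gradient_sq_le hF hLip x y
  have hyx := norm_sub_gradient_sq_le hF hLip y x
  rw [← neg_sub y x, inner_neg_right, norm_sub_rev (gradient F y), norm_sub_rev y,
    add_comm (gradient F y)] at hyx
  rcases abs_cases (2 * (F x - F y) + ⟪gradient F x + gradient F y, y - x⟫) with ⟨h, -⟩ | ⟨h, -⟩ <;>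
    rw [h] <;> linarith

end LipschitzGradient

theorem Real.sqrt_sq_add_sq_add_le {a b m : ℝ} (ham : a ≤ m) (h : b ^ 2 + 2 * m * a ≤ m ^ 2) :
    √(a ^ 2 + b ^ 2) + a ≤ m := by
  have : √(a ^ 2 + b ^ 2) ≤ m - a := Real.sqrt_le_iff.2 ⟨sub_nonneg.2 ham, by nlinarith⟩
  linarith

section Jets

variable {d : ℕ} {f : EuclideanSpace ℝ (Fin d) → ℝ}
  {g : EuclideanSpace ℝ (Fin d) → EuclideanSpace ℝ (Fin d)}

theorem funA_eq_abs_div (x y : EuclideanSpace ℝ (Fin d)) :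
    funA f g x y = |2 * (f x - f y) + ⟪g x + g y, y - x⟫| / ‖x - y‖ ^ 2 := by
  have hyx : ⟪g y, y - x⟫ = -⟪g y, x - y⟫ := by rw [← inner_neg_right, neg_sub]
  simp only [funA, jet, sub_self, inner_zero_right, inner_add_left, hyx]
  ring_nf

theorem sqrt_funA_sq_add_funB_sq_add_funA_le {F : EuclideanSpace ℝ (Fin d) → ℝ} {K : ℝ≥0}
    (hF : Differentiable ℝ F) (hLip : LipschitzWith K (gradient F))
    {x y : EuclideanSpace ℝ (Fin d)} (hxy : x ≠ y)
    (hx : F x = f x ∧ gradient F x = g x) (hy : F y = f y ∧ gradient F y = g y) :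
    √(funA f g x y ^ 2 + funB g x y ^ 2) + funA f g x y ≤ K := by
  have hr : 0 < ‖x - y‖ ^ 2 := pow_pos (norm_pos_iff.2 (sub_ne_zero.2 hxy)) 2
  have hN := abs_two_mul_sub_add_inner_le hF hLip x y
  have hδN := norm_sub_gradient_sq_add_abs_le hF hLip x y
  rw [hx.1, hy.1, hx.2, hy.2] at hN hδN
  apply Real.sqrt_sq_add_sq_add_le
  · rwa [funA_eq_abs_div, div_le_iff₀ hr]
  · rwa [funA_eq_abs_div, funB, div_pow, mul_div_assoc', ← add_div, div_le_iff₀ hr]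

end Jets

theorem statement1_general {d : ℕ} (E : Set (EuclideanSpace ℝ (Fin d)))
    (f : EuclideanSpace ℝ (Fin d) → ℝ)
    (g : EuclideanSpace ℝ (Fin d) → EuclideanSpace ℝ (Fin d))
    (F : EuclideanSpace ℝ (Fin d) → ℝ) (M : ℝ) (hM : 0 ≤ M)
    (hF : Differentiable ℝ F)
    (hLip : LipschitzWith M.toNNReal (gradient F))
    (hInterp : ∀ x ∈ E, F x = f x ∧ gradient F x = g x) :
    Gamma E f g ≤ M ∧ ∀ x ∈ E, ∀ y ∈ E, x ≠ y →
      Real.sqrt (funA f g x y ^ 2 + funB g x y ^ 2) + funA f g x y ≤ M := by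
  have hpair : ∀ x ∈ E, ∀ y ∈ E, x ≠ y →
      Real.sqrt (funA f g x y ^ 2 + funB g x y ^ 2) + funA f g x y ≤ M := fun x hx y hy hxy => by
    simpa [hM] using
      sqrt_funA_sq_add_funB_sq_add_funA_le hF hLip hxy (hInterp x hx) (hInterp y hy)
  refine ⟨Real.sSup_le ?_ hM, hpair⟩
  rintro t ⟨x, hx, y, hy, hxy, rfl⟩
  exact hpair x hx y hy hxy

/-- If `F` interpolates the 1-field and `∇F` is `M`-Lipschitz, then `Γ(P_E) ≤ M`;
in particular each `√(A² + B²) + A ≤ M`. -/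
theorem statement1 {d : ℕ} (hd : 1 ≤ d) (E : Set (EuclideanSpace ℝ (Fin d)))
    (hE : E.Finite) (h2 : ∃ x ∈ E, ∃ y ∈ E, x ≠ y)
    (f : EuclideanSpace ℝ (Fin d) → ℝ)
    (g : EuclideanSpace ℝ (Fin d) → EuclideanSpace ℝ (Fin d))
    (F : EuclideanSpace ℝ (Fin d) → ℝ) (M : ℝ) (hM : 0 ≤ M)
    (hF : Differentiable ℝ F)
    (hLip : LipschitzWith M.toNNReal (gradient F))
    (hInterp : ∀ x ∈ E, F x = f x ∧ gradient F x = g x) :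
    Gamma E f g ≤ M ∧ ∀ x ∈ E, ∀ y ∈ E, x ≠ y →
      Real.sqrt (funA f g x y ^ 2 + funB g x y ^ 2) + funA f g x y ≤ M :=
  statement1_general E f g F M hM hF hLip hInterp
end

section
/- Let d ≥ 1, let E ⊆ ℝ^d be a finite set with at least two points, and let P_E be a 1-field on E. Then there exists a differentiable function F : ℝ^d → ℝ whose gradient ∇F is Lipschitz with constant Γ(P_E) and which satisfies F(x) = f(x) and ∇F(x) = g(x) for all x ∈ E. -/
open scoped RealInnerProductSpace

/-!
For jets `p, q` (a point, a value and a gradient) let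
`S = P_p(x_p) - P_q(x_p) + P_p(x_q) - P_q(x_q)` and call them `κ`-compatible when
`‖∇p - ∇q‖² + 2κ|S| ≤ κ² ‖x_p - x_q‖²`; for distinct points this is `B² + 2κA ≤ κ²`, which follows
from `√(A² + B²) + A ≤ κ`. A compatible field on the whole space has `κ`-Lipschitz gradient and a
quadratic Taylor bound, so it is the sought interpolant, and by Zorn's lemma it suffices to extend
a compatible family by one point `z`.

A jet with value `t` and gradient `w` at `z` is compatible with `p` iff `(t, w)` lies above the
upward paraboloid with apex `p.lower κ z` and below the downward one with apex `p.upper κ z`,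
while compatibility of `p` and `q` says exactly that `p.upper κ z` lies above the paraboloid with
apex `q.lower κ z`. For finitely many constraints, minimise the largest gap between a lower and an
upper paraboloid. At a minimiser `0` is a convex combination of the active gradients
`(x - a_j) + (x - b_i)`; the active pairs form a rectangle, so `0 = P + Q` with `P, Q` in the
convex hulls of the `x - a_j` and of the `x - b_i`, and a positive gap would force `⟪P, Q⟫ > 0`,
whereas `⟪P, Q⟫ = -‖P‖²`. Compactness of the constraint sets passes to infinitely many
constraints. When `Γ = 0`, all jets lie on a single affine function.
-/

open Filter Topology Set
open scoped Pointwise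

lemma sq_add_two_mul_le_sq_of_sqrt_add_le {a b k : ℝ} (h : √(a ^ 2 + b ^ 2) + a ≤ k) :
    b ^ 2 + 2 * k * a ≤ k ^ 2 := by
  have := (Real.sqrt_le_iff.1 (le_sub_iff_add_le.2 h)).2
  nlinarith

section Paraboloid

variable {E : Type*} [NormedAddCommGroup E]

lemma Continuous.exists_forall_le_of_add_mul_norm_sub_sq_le [ProperSpace E] {Φ : E → ℝ}
    (hΦ : Continuous Φ) {a : E} {C ε : ℝ} (hε : 0 < ε) (h : ∀ w, C + ε * ‖w - a‖ ^ 2 ≤ Φ w) :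
    ∃ x, ∀ y, Φ x ≤ Φ y := by
  refine hΦ.exists_forall_le_of_isBounded a
    ((Metric.isBounded_closedBall (x := a) (r := (Φ a - C) / ε + 1)).subset fun w hw => ?_)
  have hw' : ‖w - a‖ ^ 2 ≤ (Φ a - C) / ε := (le_div_iff₀' hε).2 (by linarith [(h w).trans hw])
  rw [Metric.mem_closedBall, dist_eq_norm]
  nlinarith [sq_nonneg (‖w - a‖ - 1)]

/-- `q` lies in the solid paraboloid `{(t, w) | p.1 + ‖w - p.2‖² / c ≤ t}` with apex `p`. -/
def ParabolicLE (c : ℝ) (p q : ℝ × E) : Prop := ‖q.2 - p.2‖ ^ 2 ≤ c * (q.1 - p.1)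

lemma isCompact_setOf_parabolicLE [ProperSpace E] {c : ℝ} (hc : 0 < c) (l u : ℝ × E) :
    IsCompact {r | ParabolicLE c l r ∧ ParabolicLE c r u} := by
  have hclosed : IsClosed ({r : ℝ × E | ‖r.2 - l.2‖ ^ 2 ≤ c * (r.1 - l.1)} ∩
      {r | ‖u.2 - r.2‖ ^ 2 ≤ c * (u.1 - r.1)}) :=
    (isClosed_le (by fun_prop) (by fun_prop)).inter (isClosed_le (by fun_prop) (by fun_prop))
  refine ((isCompact_Icc (a := l.1) (b := u.1)).prod
    (isCompact_closedBall u.2 (c * (u.1 - l.1) + 1))).of_isClosed_subset hclosed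
    fun r ⟨hl, hu⟩ => ?_
  unfold ParabolicLE at hl hu
  have hlr : l.1 ≤ r.1 := by nlinarith [sq_nonneg ‖r.2 - l.2‖]
  have hru : r.1 ≤ u.1 := by nlinarith [sq_nonneg ‖u.2 - r.2‖]
  refine ⟨⟨hlr, hru⟩, ?_⟩
  rw [Metric.mem_closedBall, dist_eq_norm, norm_sub_rev]
  nlinarith [sq_nonneg (‖u.2 - r.2‖ - 1)]

lemma exists_parabolicLE_between_of_le {ι₁ ι₂ : Type*} [Finite ι₁] [Nonempty ι₁] {c : ℝ}
    (hc : 0 < c) {l : ι₁ → ℝ × E} {u : ι₂ → ℝ × E} {x : E}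
    (hx : ∀ j i, c * (l j).1 + ‖x - (l j).2‖ ^ 2 + ‖x - (u i).2‖ ^ 2 ≤ c * (u i).1) :
    ∃ r, (∀ j, ParabolicLE c (l j) r) ∧ ∀ i, ParabolicLE c r (u i) := by
  set t := ⨆ j, (l j).1 + ‖x - (l j).2‖ ^ 2 / c
  refine ⟨(t, x), fun j => (div_le_iff₀' hc).1 ?_, fun i => (div_le_iff₀' hc).1 ?_⟩
  · have := le_ciSup (f := fun j => (l j).1 + ‖x - (l j).2‖ ^ 2 / c) (Finite.bddAbove_range _) j
    dsimp only
    linarith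
  · have ht : t ≤ (u i).1 - ‖x - (u i).2‖ ^ 2 / c := ciSup_le fun j => by
      have : (‖x - (l j).2‖ ^ 2 + ‖x - (u i).2‖ ^ 2) / c ≤ (u i).1 - (l j).1 :=
        (div_le_iff₀' hc).2 (by linarith [hx j i])
      rw [add_div] at this
      linarith
    rw [norm_sub_rev]
    dsimp only
    linarith

end Paraboloid

section InnerProductSpace

variable {H : Type*} [NormedAddCommGroup H] [InnerProductSpace ℝ H]

lemma hasGradientAt_of_abs_sub_le [CompleteSpace H] {F : H → ℝ} {g x : H} {C : ℝ}
    (h : ∀ y, |F y - F x - ⟪g, y - x⟫| ≤ C * ‖y - x‖ ^ 2) : HasGradientAt F g x := by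
  rw [hasGradientAt_iff_isLittleO]
  refine Asymptotics.IsBigO.trans_isLittleO (g := fun y => ‖y - x‖ ^ 2) ?_
    (Asymptotics.isLittleO_pow_sub_sub x one_lt_two)
  refine Asymptotics.IsBigO.of_bound C (Eventually.of_forall fun y => ?_)
  simpa using h y

lemma hasGradientAt_const_add_half_norm_sub_sq_add [CompleteSpace H] (C : ℝ) (a b x : H) :
    HasGradientAt (fun w => C + (‖w - a‖ ^ 2 + ‖w - b‖ ^ 2) / 2) ((x - a) + (x - b)) x := by
  refine hasGradientAt_of_abs_sub_le (C := 1) fun y => ?_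
  have hsq (a : H) : ‖y - a‖ ^ 2 = ‖y - x‖ ^ 2 + 2 * ⟪y - x, x - a⟫ + ‖x - a‖ ^ 2 := by
    rw [← norm_add_sq_real, sub_add_sub_cancel]
  have hrem : C + (‖y - a‖ ^ 2 + ‖y - b‖ ^ 2) / 2 - (C + (‖x - a‖ ^ 2 + ‖x - b‖ ^ 2) / 2) -
      ⟪(x - a) + (x - b), y - x⟫ = ‖y - x‖ ^ 2 := by
    rw [hsq a, hsq b, inner_add_left, real_inner_comm (x - a), real_inner_comm (x - b)]
    ring
  rw [hrem, abs_of_nonneg (sq_nonneg _), one_mul]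

lemma HasGradientAt.eventually_lt_of_inner_neg [CompleteSpace H] {φ : H → ℝ} {g x v : H}
    (hφ : HasGradientAt φ g x) (hv : ⟪g, v⟫ < 0) :
    ∀ᶠ s in 𝓝[>] (0 : ℝ), φ (x + s • v) < φ x := by
  have hline : HasDerivAt (fun s : ℝ => φ (x + s • v)) ⟪g, v⟫ 0 := by
    have := hφ.hasFDerivAt.comp_hasDerivAt_of_eq (0 : ℝ)
      (((hasDerivAt_id (0 : ℝ)).smul_const v).const_add x) (by simp)
    simp only [Function.comp_def, one_smul, InnerProductSpace.toDual_apply_apply] at this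
    exact this
  filter_upwards [hline.hasDerivWithinAt.limsup_slope_le' self_notMem_Ioi hv,
    self_mem_nhdsWithin] with s hs hs0
  rw [slope_def_field, zero_smul, add_zero, sub_zero] at hs
  linarith [(div_lt_iff₀ (show (0 : ℝ) < s from hs0)).1 hs]

theorem zero_mem_convexHull_of_isLocalMin_iSup [CompleteSpace H] {ι : Type*} [Finite ι]
    [Nonempty ι] {φ : ι → H → ℝ} {φ' : ι → H} {x : H}
    (hφ : ∀ k, HasGradientAt (φ k) (φ' k) x) (hmin : IsLocalMin (fun y => ⨆ k, φ k y) x) :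
    (0 : H) ∈ convexHull ℝ (φ' '' {k | φ k x = ⨆ k', φ k' x}) := by
  by_contra h0
  obtain ⟨ℓ, u, hℓ0, hℓ⟩ := geometric_hahn_banach_point_closed (convex_convexHull ℝ _)
    ((toFinite _).image φ' |>.isClosed_convexHull ℝ) h0
  rw [map_zero] at hℓ0
  set v := -(InnerProductSpace.toDual ℝ H).symm ℓ
  -- Along `v` every active `φ k` decreases to first order, and the others stay below the max.
  have hdesc (k : ι) : ∀ᶠ s in 𝓝[>] (0 : ℝ), φ k (x + s • v) < ⨆ k', φ k' x := by
    by_cases hk : φ k x = ⨆ k', φ k' x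
    · rw [← hk]
      refine (hφ k).eventually_lt_of_inner_neg ?_
      rw [inner_neg_right, real_inner_comm, InnerProductSpace.toDual_symm_apply, neg_neg_iff_pos]
      exact hℓ0.trans (hℓ _ (subset_convexHull ℝ _ (mem_image_of_mem φ' hk)))
    · have hlt : φ k x < ⨆ k', φ k' x :=
        (le_ciSup (f := fun k' => φ k' x) (Finite.bddAbove_range _) k).lt_of_ne hk
      have hcont : ContinuousAt (fun s : ℝ => φ k (x + s • v)) 0 :=
        (hφ k).differentiableAt.continuousAt.comp_of_eq (by fun_prop) (by simp)
      exact nhdsWithin_le_nhds (hcont.eventually (eventually_lt_nhds (by simpa using hlt)))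
  have hline : Tendsto (fun s : ℝ => x + s • v) (𝓝[>] 0) (𝓝 x) :=
    ((Continuous.tendsto' (by fun_prop) 0 x (by simp))).mono_left nhdsWithin_le_nhds
  obtain ⟨s, hs, hle⟩ := ((eventually_all.2 hdesc).and (hline.eventually hmin)).exists
  obtain ⟨k, hk⟩ := exists_eq_ciSup_of_finite (f := fun k => φ k (x + s • v))
  exact (hs k).not_ge (hle.trans hk.ge)

lemma inner_pos_of_mem_convexHull {s t : Set H} (h : ∀ a ∈ s, ∀ b ∈ t, 0 < ⟪a, b⟫) {a b : H}
    (ha : a ∈ convexHull ℝ s) (hb : b ∈ convexHull ℝ t) : 0 < ⟪a, b⟫ := by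
  have hhalf (v : H) : Convex ℝ {w : H | 0 < ⟪v, w⟫} :=
    convex_halfSpace_gt (innerₛₗ ℝ v).isLinear 0
  have hat : ∀ b ∈ t, 0 < ⟪a, b⟫ := fun b hb => by
    have : a ∈ {w : H | 0 < ⟪b, w⟫} := convexHull_min
      (fun a' ha' => by rw [mem_ofPred_eq, real_inner_comm]; exact h a' ha' b hb) (hhalf b) ha
    rwa [mem_ofPred_eq, real_inner_comm] at this
  exact convexHull_min hat (hhalf a) hb

lemma iSup_add_nonpos_of_zero_mem_convexHull {ι₁ ι₂ : Type*} [Finite ι₁] [Finite ι₂]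
    [Nonempty ι₁] [Nonempty ι₂] {α : ι₁ → ℝ} {β : ι₂ → ℝ} {p : ι₁ → H} {q : ι₂ → H}
    (hle : ∀ j i, α j + β i ≤ ⟪p j, q i⟫)
    (h0 : (0 : H) ∈ convexHull ℝ ((fun k : ι₁ × ι₂ => p k.1 + q k.2) ''
      {k | α k.1 + β k.2 = ⨆ k' : ι₁ × ι₂, α k'.1 + β k'.2})) :
    ⨆ k : ι₁ × ι₂, α k.1 + β k.2 ≤ 0 := by
  set M := ⨆ k : ι₁ × ι₂, α k.1 + β k.2
  set A := {k : ι₁ × ι₂ | α k.1 + β k.2 = M}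
  have hM (k : ι₁ × ι₂) : α k.1 + β k.2 ≤ M :=
    le_ciSup (f := fun k : ι₁ × ι₂ => α k.1 + β k.2) (Finite.bddAbove_range _) k
  -- `A` is a product set, so the hull of the active `p j + q i` splits as a Minkowski sum.
  have hrect : ∀ k ∈ A, ∀ k' ∈ A, (k.1, k'.2) ∈ A := fun k hk k' hk' =>
    le_antisymm (hM _) (by linarith [hM (k'.1, k.2), hk.symm.le, hk'.symm.le])
  have hsplit : (fun k : ι₁ × ι₂ => p k.1 + q k.2) '' A ⊆
      (fun k : ι₁ × ι₂ => p k.1) '' A + (fun k : ι₁ × ι₂ => q k.2) '' A := by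
    rintro _ ⟨k, hk, rfl⟩
    exact add_mem_add (mem_image_of_mem _ hk) (mem_image_of_mem _ hk)
  have h0' := convexHull_mono (𝕜 := ℝ) hsplit h0
  rw [convexHull_add] at h0'
  obtain ⟨P, hP, Q, hQ, hPQ⟩ := h0'
  by_contra! hpos
  have hPQpos : 0 < ⟪P, Q⟫ := by
    refine inner_pos_of_mem_convexHull ?_ hP hQ
    rintro _ ⟨k, hk, rfl⟩ _ ⟨k', hk', rfl⟩
    linarith [hle k.1 k'.2, (hrect k hk k' hk').symm.le]
  rw [eq_neg_of_add_eq_zero_right hPQ, inner_neg_right, real_inner_self_eq_norm_sq] at hPQpos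
  linarith [sq_nonneg ‖P‖]

theorem exists_parabolicLE_between [FiniteDimensional ℝ H] {ι₁ ι₂ : Type*} [Fintype ι₁]
    [Fintype ι₂] [Nonempty ι₁] [Nonempty ι₂] {c : ℝ} (hc : 0 < c) {l : ι₁ → ℝ × H}
    {u : ι₂ → ℝ × H} (h : ∀ j i, ParabolicLE c (l j) (u i)) :
    ∃ r, (∀ j, ParabolicLE c (l j) r) ∧ ∀ i, ParabolicLE c r (u i) := by
  -- `2 (α w j + β w i) / c` is the gap at `w` between the paraboloids with apexes `l j`, `u i`.
  set α : H → ι₁ → ℝ := fun w j => (c * (l j).1 + ‖w - (l j).2‖ ^ 2) / 2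
  set β : H → ι₂ → ℝ := fun w i => (‖w - (u i).2‖ ^ 2 - c * (u i).1) / 2
  set Φ : H → ℝ := fun w => ⨆ k : ι₁ × ι₂, α w k.1 + β w k.2
  have hΦ (w : H) (k : ι₁ × ι₂) : α w k.1 + β w k.2 ≤ Φ w :=
    le_ciSup (f := fun k : ι₁ × ι₂ => α w k.1 + β w k.2) (Finite.bddAbove_range _) k
  obtain ⟨x, hx⟩ : ∃ x, ∀ y, Φ x ≤ Φ y := by
    have hcont : Continuous Φ := by
      simp only [Φ, ← Finset.sup'_univ_eq_ciSup]
      exact Continuous.finset_sup'_apply _ fun k _ => by fun_prop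
    obtain ⟨j, i⟩ := Classical.arbitrary (ι₁ × ι₂)
    refine hcont.exists_forall_le_of_add_mul_norm_sub_sq_le (a := (l j).2)
      (C := c * ((l j).1 - (u i).1) / 2) (ε := 1 / 2) one_half_pos fun w => ?_
    have := hΦ w (j, i)
    simp only [α, β] at this
    nlinarith [sq_nonneg ‖w - (u i).2‖]
  have hgrad (k : ι₁ × ι₂) : HasGradientAt (fun w => α w k.1 + β w k.2)
      ((x - (l k.1).2) + (x - (u k.2).2)) x :=
    (hasGradientAt_const_add_half_norm_sub_sq_add (c * ((l k.1).1 - (u k.2).1) / 2) _ _ x)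
      |>.congr_of_eventuallyEq (Eventually.of_forall fun w => by simp only [α, β]; ring)
  have hle (j : ι₁) (i : ι₂) : α x j + β x i ≤ ⟪x - (l j).2, x - (u i).2⟫ := by
    have hji := h j i
    unfold ParabolicLE at hji
    rw [show (u i).2 - (l j).2 = (x - (l j).2) - (x - (u i).2) by abel, norm_sub_sq_real] at hji
    simp only [α, β]
    linarith
  have hΦx : Φ x ≤ 0 := iSup_add_nonpos_of_zero_mem_convexHull hle
    (zero_mem_convexHull_of_isLocalMin_iSup hgrad (IsMinOn.isLocalMin (fun y _ => hx y) univ_mem))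
  refine exists_parabolicLE_between_of_le hc (x := x) fun j i => ?_
  have hji := (hΦ x (j, i)).trans hΦx
  simp only [α, β] at hji
  linarith

@[ext]
structure Jet (H : Type*) where
  pt : H
  val : ℝ
  grad : H

namespace Jet

def of (f : H → ℝ) (g : H → H) (x : H) : Jet H := ⟨x, f x, g x⟩

noncomputable def eval (p : Jet H) (z : H) : ℝ := p.val + ⟪p.grad, z - p.pt⟫

noncomputable def defect (p q : Jet H) : ℝ := p.eval p.pt - q.eval p.pt + p.eval q.pt - q.eval q.pt

def Compatible (κ : ℝ) (p q : Jet H) : Prop :=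
  ‖p.grad - q.grad‖ ^ 2 + 2 * κ * |p.defect q| ≤ κ ^ 2 * ‖p.pt - q.pt‖ ^ 2

noncomputable def upper (p : Jet H) (κ : ℝ) (z : H) : ℝ × H :=
  (p.eval z + κ / 2 * ‖z - p.pt‖ ^ 2, p.grad + κ • (z - p.pt))

noncomputable def lower (p : Jet H) (κ : ℝ) (z : H) : ℝ × H :=
  (p.eval z - κ / 2 * ‖z - p.pt‖ ^ 2, p.grad - κ • (z - p.pt))

variable {κ : ℝ} (p q : Jet H)

lemma defect_eq : p.defect q = 2 * (p.val - q.val) - ⟪p.grad + q.grad, p.pt - q.pt⟫ := by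
  simp only [defect, eval, sub_self, inner_zero_right, inner_add_left]
  rw [← neg_sub p.pt q.pt, inner_neg_right]
  ring

lemma defect_swap : q.defect p = -p.defect q := by
  simp only [defect]; ring

instance : Std.Refl (Compatible (H := H) κ) where
  refl p := by simp [Compatible, defect]

instance : Std.Symm (Compatible (H := H) κ) where
  symm p q h := by rwa [Compatible, defect_swap, abs_neg, norm_sub_rev, norm_sub_rev q.pt]

@[simp] lemma upper_pt : p.upper κ p.pt = (p.val, p.grad) := by simp [upper, eval]
@[simp] lemma lower_pt : p.lower κ p.pt = (p.val, p.grad) := by simp [lower, eval]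

lemma upper_sub_lower (z : H) :
    4 * κ * ((p.upper κ z).1 - (q.lower κ z).1) - ‖(p.upper κ z).2 - (q.lower κ z).2‖ ^ 2 =
      2 * κ * p.defect q + κ ^ 2 * ‖p.pt - q.pt‖ ^ 2 - ‖p.grad - q.grad‖ ^ 2 := by
  have hz : p.pt - q.pt = (z - q.pt) - (z - p.pt) := by abel
  have hv : p.grad + κ • (z - p.pt) - (q.grad - κ • (z - q.pt)) =
      (p.grad - q.grad) + κ • ((z - p.pt) + (z - q.pt)) := by
    simp only [smul_add]; abel
  simp only [upper, lower, eval, defect_eq, hz, hv, ← real_inner_self_eq_norm_sq]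
  simp only [inner_sub_left, inner_sub_right, inner_add_left, inner_add_right,
    real_inner_smul_right, real_inner_comm]
  ring

lemma hasGradientAt_eval [CompleteSpace H] (x : H) : HasGradientAt p.eval p.grad x :=
  hasGradientAt_of_abs_sub_le (C := 0) fun y => by simp [eval, inner_sub_right]

lemma compatible_of_sqrt_add_le (hpq : p.pt ≠ q.pt)
    (h : √((|p.defect q| / ‖p.pt - q.pt‖ ^ 2) ^ 2 + (‖p.grad - q.grad‖ / ‖p.pt - q.pt‖) ^ 2) +
      |p.defect q| / ‖p.pt - q.pt‖ ^ 2 ≤ κ) : Compatible κ p q := by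
  have hd : ‖p.pt - q.pt‖ ≠ 0 := norm_ne_zero_iff.2 (sub_ne_zero.2 hpq)
  have := mul_le_mul_of_nonneg_right (sq_add_two_mul_le_sq_of_sqrt_add_le h)
    (sq_nonneg ‖p.pt - q.pt‖)
  unfold Compatible
  field_simp at this
  linarith

lemma grad_eq_and_val_eq_eval_of_sqrt_add_nonpos (hpq : p.pt ≠ q.pt)
    (h : √((|p.defect q| / ‖p.pt - q.pt‖ ^ 2) ^ 2 + (‖p.grad - q.grad‖ / ‖p.pt - q.pt‖) ^ 2) +
      |p.defect q| / ‖p.pt - q.pt‖ ^ 2 ≤ 0) : q.grad = p.grad ∧ q.val = p.eval q.pt := by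
  have hd : ‖p.pt - q.pt‖ ≠ 0 := norm_ne_zero_iff.2 (sub_ne_zero.2 hpq)
  have hA : |p.defect q| / ‖p.pt - q.pt‖ ^ 2 = 0 :=
    le_antisymm (by linarith [Real.sqrt_nonneg ((|p.defect q| / ‖p.pt - q.pt‖ ^ 2) ^ 2 +
      (‖p.grad - q.grad‖ / ‖p.pt - q.pt‖) ^ 2)]) (by positivity)
  have hB : (‖p.grad - q.grad‖ / ‖p.pt - q.pt‖) ^ 2 = 0 :=
    le_antisymm (by simpa using sq_add_two_mul_le_sq_of_sqrt_add_le h) (sq_nonneg _)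
  simp only [div_eq_zero_iff, abs_eq_zero, hd, pow_eq_zero_iff, ne_eq, OfNat.ofNat_ne_zero,
    not_false_eq_true, or_false, norm_eq_zero, sub_eq_zero] at hA hB
  rw [defect_eq, inner_add_left, hB] at hA
  refine ⟨hB.symm, ?_⟩
  rw [eval, hB, ← neg_sub p.pt q.pt, inner_neg_right]
  linarith

variable {p q}

lemma Compatible.parabolicLE_lower_upper (hκ : 0 ≤ κ) (h : Compatible κ p q)
    (z : H) : ParabolicLE (4 * κ) (q.lower κ z) (p.upper κ z) := by
  have key := upper_sub_lower (κ := κ) p q z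
  have := neg_abs_le (p.defect q)
  unfold Compatible at h
  unfold ParabolicLE
  nlinarith

lemma compatible_mk_iff (hκ : 0 ≤ κ) {z : H} {t : ℝ} {w : H} :
    Compatible κ ⟨z, t, w⟩ p ↔
      ParabolicLE (4 * κ) (p.lower κ z) (t, w) ∧ ParabolicLE (4 * κ) (t, w) (p.upper κ z) := by
  set r : Jet H := ⟨z, t, w⟩
  constructor
  · intro h
    exact ⟨r.upper_pt (κ := κ) ▸ h.parabolicLE_lower_upper hκ z,
      r.lower_pt (κ := κ) ▸ (Std.Symm.symm r p h).parabolicLE_lower_upper hκ z⟩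
  · rintro ⟨hl, hu⟩
    have key₁ := upper_sub_lower (κ := κ) r p z
    have key₂ := upper_sub_lower (κ := κ) p r z
    rw [show r.upper κ z = (t, w) from r.upper_pt] at key₁
    rw [show r.lower κ z = (t, w) from r.lower_pt, defect_swap, norm_sub_rev p.pt,
      norm_sub_rev p.grad] at key₂
    unfold ParabolicLE at hl hu
    unfold Compatible
    rcases abs_cases (r.defect p) with ⟨h, -⟩ | ⟨h, -⟩ <;> rw [h] <;> linarith

lemma Compatible.eq_of_pt_eq (hκ : 0 < κ) (h : Compatible κ p q)
    (hpt : p.pt = q.pt) : p = q := by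
  rw [Compatible, hpt, sub_self, norm_zero] at h
  have hgrad : p.grad = q.grad := by
    rw [← sub_eq_zero, ← norm_eq_zero, ← sq_eq_zero_iff]
    nlinarith [abs_nonneg (p.defect q)]
  have hdef : |p.defect q| = 0 := by
    nlinarith [abs_nonneg (p.defect q), sq_nonneg ‖p.grad - q.grad‖]
  rw [abs_eq_zero, defect_eq, hpt, sub_self, inner_zero_right] at hdef
  cases p; cases q
  simp_all
  linarith

lemma Compatible.norm_grad_sub_le (hκ : 0 ≤ κ) (h : Compatible κ p q) :
    ‖p.grad - q.grad‖ ≤ κ * ‖p.pt - q.pt‖ := by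
  unfold Compatible at h
  apply pow_le_pow_iff_left₀ (norm_nonneg _) (by positivity) two_ne_zero |>.1
  nlinarith [abs_nonneg (p.defect q)]

lemma Compatible.abs_val_sub_eval_le (hκ : 0 < κ) (h : Compatible κ p q) :
    |q.val - p.eval q.pt| ≤ κ * ‖q.pt - p.pt‖ ^ 2 := by
  have hsplit : q.val - p.eval q.pt =
      -(p.defect q / 2) + ⟪p.grad - q.grad, p.pt - q.pt⟫ / 2 := by
    rw [defect_eq, eval, ← neg_sub p.pt q.pt, inner_neg_right, inner_add_left, inner_sub_left]
    ring
  have hdef : |p.defect q| ≤ κ * ‖p.pt - q.pt‖ ^ 2 / 2 := by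
    unfold Compatible at h
    nlinarith [sq_nonneg ‖p.grad - q.grad‖]
  have hinner : |⟪p.grad - q.grad, p.pt - q.pt⟫| ≤ κ * ‖p.pt - q.pt‖ ^ 2 :=
    calc |⟪p.grad - q.grad, p.pt - q.pt⟫| ≤ ‖p.grad - q.grad‖ * ‖p.pt - q.pt‖ :=
          abs_real_inner_le_norm _ _
      _ ≤ κ * ‖p.pt - q.pt‖ * ‖p.pt - q.pt‖ := by
          gcongr; exact h.norm_grad_sub_le hκ.le
      _ = κ * ‖p.pt - q.pt‖ ^ 2 := by ring
  rw [hsplit, norm_sub_rev]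
  calc _ ≤ |p.defect q / 2| + |⟪p.grad - q.grad, p.pt - q.pt⟫ / 2| := by
        simpa using abs_add_le (-(p.defect q / 2)) _
    _ ≤ _ := by
        rw [abs_div, abs_div, abs_two]
        nlinarith [sq_nonneg ‖p.pt - q.pt‖]

lemma exists_compatible_at [FiniteDimensional ℝ H] (hκ : 0 < κ) {M : Set (Jet H)}
    (hM : M.Pairwise (Compatible κ)) (z : H) :
    ∃ r : Jet H, r.pt = z ∧ ∀ p ∈ M, Compatible κ r p := by
  rcases M.eq_empty_or_nonempty with rfl | ⟨p₀, hp₀⟩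
  · exact ⟨⟨z, 0, 0⟩, rfl, by simp⟩
  set K : M → Set (ℝ × H) := fun p =>
    {r | ParabolicLE (4 * κ) (p.1.lower κ z) r ∧ ParabolicLE (4 * κ) r (p.1.upper κ z)}
  have hK (p : M) : IsCompact (K p) := isCompact_setOf_parabolicLE (by positivity) _ _
  obtain ⟨r, -, hr⟩ := (hK ⟨p₀, hp₀⟩).inter_iInter_nonempty K (fun p => (hK p).isClosed)
    fun s => by
      classical
      have : Nonempty ↥(insert ⟨p₀, hp₀⟩ s) := ⟨⟨_, Finset.mem_insert_self _ _⟩⟩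
      obtain ⟨r, hl, hu⟩ := exists_parabolicLE_between (ι₁ := ↥(insert ⟨p₀, hp₀⟩ s))
        (ι₂ := ↥(insert ⟨p₀, hp₀⟩ s)) (by positivity : 0 < 4 * κ)
        (l := fun p => p.1.1.lower κ z) (u := fun p => p.1.1.upper κ z)
        fun q p => (hM.of_refl p.1.2 q.1.2).parabolicLE_lower_upper hκ.le z
      exact ⟨r, ⟨hl ⟨_, Finset.mem_insert_self _ _⟩, hu ⟨_, Finset.mem_insert_self _ _⟩⟩,
        mem_iInter₂.2 fun p hp =>
          ⟨hl ⟨p, Finset.mem_insert_of_mem hp⟩, hu ⟨p, Finset.mem_insert_of_mem hp⟩⟩⟩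
  exact ⟨⟨z, r.1, r.2⟩, rfl, fun p hp => (compatible_mk_iff hκ.le).2 (mem_iInter.1 hr ⟨p, hp⟩)⟩

lemma exists_compatible_superset [FiniteDimensional ℝ H] (hκ : 0 < κ) {M₀ : Set (Jet H)}
    (h : M₀.Pairwise (Compatible κ)) :
    ∃ M, M₀ ⊆ M ∧ M.Pairwise (Compatible κ) ∧ ∀ z, ∃ p ∈ M, p.pt = z := by
  obtain ⟨M, hM₀, hmax⟩ := zorn_subset_nonempty {M | M.Pairwise (Compatible κ)}
    (fun c hc hchain _ => ⟨⋃₀ c, hchain.pairwise_sUnion.2 fun s hs => hc hs,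
      fun _ => subset_sUnion_of_mem⟩) M₀ h
  refine ⟨M, hM₀, hmax.prop, fun z => ?_⟩
  obtain ⟨r, rfl, hr⟩ := exists_compatible_at hκ hmax.prop z
  exact ⟨r, hmax.mem_of_prop_insert (hmax.prop.insert_of_symm fun p hp _ => hr p hp), rfl⟩

end Jet

theorem exists_compatible_field [FiniteDimensional ℝ H] {κ : ℝ} (hκ : 0 < κ) {E : Set H}
    {f : H → ℝ} {g : H → H}
    (h : E.Pairwise fun x y => Jet.Compatible κ (Jet.of f g x) (Jet.of f g y)) :
    ∃ (F : H → ℝ) (G : H → H), (∀ x y, Jet.Compatible κ (Jet.of F G x) (Jet.of F G y)) ∧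
      ∀ x ∈ E, F x = f x ∧ G x = g x := by
  have hinj : E.InjOn (Jet.of f g) := fun x _ y _ hxy => congrArg Jet.pt hxy
  obtain ⟨M, hM₀, hM, hsurj⟩ := Jet.exists_compatible_superset hκ (hinj.pairwise_image.2 h)
  choose P hPM hPpt using hsurj
  have hP (x : H) : Jet.of (fun x => (P x).val) (fun x => (P x).grad) x = P x :=
    Jet.ext (hPpt x).symm rfl rfl
  refine ⟨fun x => (P x).val, fun x => (P x).grad, fun x y => ?_, fun x hx => ?_⟩
  · rw [hP, hP]
    exact hM.of_refl (hPM x) (hPM y)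
  · have hx' : P x = Jet.of f g x := (hM.of_refl (hPM x) (hM₀ ⟨x, hx, rfl⟩)).eq_of_pt_eq hκ (hPpt x)
    exact ⟨congrArg Jet.val hx', congrArg Jet.grad hx'⟩

theorem exists_affine_extension [CompleteSpace H] {E : Set H} {f : H → ℝ} {g : H → H}
    (h : E.Pairwise fun x y => g y = g x ∧ f y = (Jet.of f g x).eval y) :
    ∃ F : H → ℝ, Differentiable ℝ F ∧ LipschitzWith 0 (gradient F) ∧
      ∀ x ∈ E, F x = f x ∧ gradient F x = g x := by
  obtain ⟨p, hp⟩ : ∃ p : Jet H, ∀ x ∈ E, g x = p.grad ∧ f x = p.eval x := by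
    rcases E.eq_empty_or_nonempty with rfl | ⟨x₀, hx₀⟩
    · exact ⟨⟨0, 0, 0⟩, by simp⟩
    refine ⟨Jet.of f g x₀, fun x hx => ?_⟩
    rcases eq_or_ne x₀ x with rfl | hne
    · simp [Jet.of, Jet.eval]
    · exact h hx₀ hx hne
  have hgrad : gradient p.eval = fun _ => p.grad := gradient_eq p.hasGradientAt_eval
  refine ⟨p.eval, fun x => (p.hasGradientAt_eval x).differentiableAt, ?_, fun x hx => ?_⟩
  · rw [hgrad]
    exact LipschitzWith.const _
  · rw [hgrad]
    exact ⟨(hp x hx).2.symm, (hp x hx).1.symm⟩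

theorem exists_extension_of_compatible [FiniteDimensional ℝ H] {κ : ℝ} (hκ : 0 < κ) {E : Set H}
    {f : H → ℝ} {g : H → H}
    (h : E.Pairwise fun x y => Jet.Compatible κ (Jet.of f g x) (Jet.of f g y)) :
    ∃ F : H → ℝ, Differentiable ℝ F ∧ LipschitzWith κ.toNNReal (gradient F) ∧
      ∀ x ∈ E, F x = f x ∧ gradient F x = g x := by
  obtain ⟨F, G, hFG, hE⟩ := exists_compatible_field hκ h
  have hgrad (x : H) : HasGradientAt F (G x) x := hasGradientAt_of_abs_sub_le fun y => by
    simpa [Jet.eval, Jet.of, sub_sub] using (hFG x y).abs_val_sub_eval_le hκ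
  obtain rfl : gradient F = G := gradient_eq hgrad
  refine ⟨F, fun x => (hgrad x).differentiableAt, LipschitzWith.of_dist_le_mul fun x y => ?_, hE⟩
  rw [dist_eq_norm, dist_eq_norm, Real.coe_toNNReal _ hκ.le]
  exact (hFG x y).norm_grad_sub_le hκ.le

end InnerProductSpace

lemma Gamma_nonneg {d : ℕ} (E : Set (EuclideanSpace ℝ (Fin d)))
    (f : EuclideanSpace ℝ (Fin d) → ℝ)
    (g : EuclideanSpace ℝ (Fin d) → EuclideanSpace ℝ (Fin d)) : 0 ≤ Gamma E f g :=
  Real.sSup_nonneg fun _ ⟨_, _, _, _, _, ht⟩ =>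
    ht ▸ add_nonneg (Real.sqrt_nonneg _) (div_nonneg (abs_nonneg _) (sq_nonneg _))

lemma le_Gamma {d : ℕ} {E : Set (EuclideanSpace ℝ (Fin d))} (hE : E.Finite)
    (f : EuclideanSpace ℝ (Fin d) → ℝ)
    (g : EuclideanSpace ℝ (Fin d) → EuclideanSpace ℝ (Fin d)) {x y : EuclideanSpace ℝ (Fin d)}
    (hx : x ∈ E) (hy : y ∈ E) (hxy : x ≠ y) :
    √(funA f g x y ^ 2 + funB g x y ^ 2) + funA f g x y ≤ Gamma E f g := by
  refine le_csSup (Set.Finite.bddAbove ?_) ⟨x, hx, y, hy, hxy, rfl⟩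
  refine ((hE.prod hE).image fun p =>
    √(funA f g p.1 p.2 ^ 2 + funB g p.1 p.2 ^ 2) + funA f g p.1 p.2).subset ?_
  rintro _ ⟨x, hx, y, hy, -, rfl⟩
  exact ⟨(x, y), ⟨hx, hy⟩, rfl⟩

theorem statement2_general {d : ℕ} (E : Set (EuclideanSpace ℝ (Fin d)))
    (hE : E.Finite)
    (f : EuclideanSpace ℝ (Fin d) → ℝ)
    (g : EuclideanSpace ℝ (Fin d) → EuclideanSpace ℝ (Fin d)) :
    ∃ F : EuclideanSpace ℝ (Fin d) → ℝ, Differentiable ℝ F ∧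
      LipschitzWith (Gamma E f g).toNNReal (gradient F) ∧
      ∀ x ∈ E, F x = f x ∧ gradient F x = g x := by
  have hΓ := fun x (hx : x ∈ E) y (hy : y ∈ E) (hxy : x ≠ y) => le_Gamma hE f g hx hy hxy
  rcases (Gamma_nonneg E f g).eq_or_lt with hzero | hpos
  · rw [← hzero] at hΓ ⊢
    rw [Real.toNNReal_zero]
    exact exists_affine_extension fun x hx y hy hxy =>
      (Jet.of f g x).grad_eq_and_val_eq_eval_of_sqrt_add_nonpos (Jet.of f g y) hxy
        (hΓ x hx y hy hxy)
  · exact exists_extension_of_compatible hpos fun x hx y hy hxy =>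
      (Jet.of f g x).compatible_of_sqrt_add_le (Jet.of f g y) hxy (hΓ x hx y hy hxy)

/-- Wells' theorem: there is an interpolant `F` of the 1-field with
`Lip(∇F) ≤ Γ(P_E)`. -/
theorem statement2 {d : ℕ} (hd : 1 ≤ d) (E : Set (EuclideanSpace ℝ (Fin d)))
    (hE : E.Finite) (h2 : ∃ x ∈ E, ∃ y ∈ E, x ≠ y)
    (f : EuclideanSpace ℝ (Fin d) → ℝ)
    (g : EuclideanSpace ℝ (Fin d) → EuclideanSpace ℝ (Fin d)) :
    ∃ F : EuclideanSpace ℝ (Fin d) → ℝ, Differentiable ℝ F ∧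
      LipschitzWith (Gamma E f g).toNNReal (gradient F) ∧
      ∀ x ∈ E, F x = f x ∧ gradient F x = g x :=
  statement2_general E hE f g
end

section
/- Let d ≥ 1, let E ⊆ ℝ^d be a finite set with at least two points, and let P_E be a 1-field on E. Then Γ̃(P_E) ≤ Γ'(P_E) ≤ 2·Γ̃(P_E). -/
open scoped RealInnerProductSpace

/-!
Since `2 (P_x(x) - P_y(x)) = (P_x(x) - P_y(x) + P_x(y) - P_y(y)) + ⟪g(x) - g(y), x - y⟫`,
Cauchy–Schwarz gives `Ã(x,y) ≤ (A(x,y) + B(x,y)) / 2 ≤ max (A(x,y), B(x,y))`. Conversely the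
symmetric difference is `(P_x(x) - P_y(x)) - (P_y(y) - P_x(y))`, so `A(x,y) ≤ Ã(x,y) + Ã(y,x)`.
Taking maxima over pairs gives both inequalities.
-/

-- `GammaPrime` and `GammaTilde` unfold to `pairSup`; it is `0` when `E` has no two distinct
-- points, since `sSup ∅ = 0` in `ℝ`.
noncomputable def pairSup {α : Type*} (E : Set α) (F : α → α → ℝ) : ℝ :=
  sSup {t : ℝ | ∃ x ∈ E, ∃ y ∈ E, x ≠ y ∧ t = F x y}

section PairSup

variable {α : Type*} {E : Set α} {F : α → α → ℝ} {a : ℝ}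

lemma pairSup_values_finite (hE : E.Finite) :
    {t : ℝ | ∃ x ∈ E, ∃ y ∈ E, x ≠ y ∧ t = F x y}.Finite := by
  refine ((hE.prod hE).image fun p => F p.1 p.2).subset ?_
  rintro t ⟨x, hx, y, hy, -, rfl⟩
  exact ⟨(x, y), ⟨hx, hy⟩, rfl⟩

lemma le_pairSup (hE : E.Finite) {x y : α} (hx : x ∈ E) (hy : y ∈ E) (hxy : x ≠ y) :
    F x y ≤ pairSup E F :=
  le_csSup (pairSup_values_finite hE).bddAbove ⟨x, hx, y, hy, hxy, rfl⟩

lemma pairSup_le (h : ∀ x ∈ E, ∀ y ∈ E, x ≠ y → F x y ≤ a) (ha : 0 ≤ a) :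
    pairSup E F ≤ a :=
  Real.sSup_le (by rintro t ⟨x, hx, y, hy, hxy, rfl⟩; exact h x hx y hy hxy) ha

lemma pairSup_nonneg (h : ∀ x ∈ E, ∀ y ∈ E, x ≠ y → 0 ≤ F x y) : 0 ≤ pairSup E F :=
  Real.sSup_nonneg (by rintro t ⟨x, hx, y, hy, hxy, rfl⟩; exact h x hx y hy hxy)

end PairSup

section Jet

variable {d : ℕ} (f : EuclideanSpace ℝ (Fin d) → ℝ)
  (g : EuclideanSpace ℝ (Fin d) → EuclideanSpace ℝ (Fin d)) (x y : EuclideanSpace ℝ (Fin d))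

lemma two_mul_jet_sub_jet : 2 * (jet f g x x - jet f g y x) =
    (jet f g x x - jet f g y x + jet f g x y - jet f g y y) + ⟪g x - g y, x - y⟫ := by
  simp only [jet, inner_sub_left, inner_sub_right, sub_self, inner_zero_right, real_inner_comm]
  ring

lemma funB_nonneg : 0 ≤ funB g x y := by
  unfold funB
  positivity

lemma funAtilde_le_half_funA_add_funB {x y : EuclideanSpace ℝ (Fin d)} (hxy : x ≠ y) :
    funAtilde f g x y ≤ (funA f g x y + funB g x y) / 2 := by
  have hr : 0 < ‖x - y‖ := norm_pos_iff.mpr (sub_ne_zero.mpr hxy)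
  have hnum : 2 * |jet f g x x - jet f g y x| ≤
      |jet f g x x - jet f g y x + jet f g x y - jet f g y y| + ‖g x - g y‖ * ‖x - y‖ := by
    calc 2 * |jet f g x x - jet f g y x| = |2 * (jet f g x x - jet f g y x)| := by
          rw [abs_mul, abs_two]
      _ ≤ |jet f g x x - jet f g y x + jet f g x y - jet f g y y| + |⟪g x - g y, x - y⟫| := by
          rw [two_mul_jet_sub_jet]
          exact abs_add_le _ _
      _ ≤ _ := by gcongr; exact abs_real_inner_le_norm _ _
  calc funAtilde f g x y = 2 * |jet f g x x - jet f g y x| / (2 * ‖x - y‖ ^ 2) := by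
        rw [funAtilde, mul_div_mul_left _ _ two_ne_zero]
    _ ≤ (|jet f g x x - jet f g y x + jet f g x y - jet f g y y| + ‖g x - g y‖ * ‖x - y‖) /
          (2 * ‖x - y‖ ^ 2) := by gcongr
    _ = (funA f g x y + funB g x y) / 2 := by
        rw [funA, funB]
        field_simp

lemma max_funAtilde_funB_le_max_funA_funB {x y : EuclideanSpace ℝ (Fin d)} (hxy : x ≠ y) :
    max (funAtilde f g x y) (funB g x y) ≤ max (funA f g x y) (funB g x y) := by
  have := funAtilde_le_half_funA_add_funB f g hxy
  have := le_max_left (funA f g x y) (funB g x y)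
  have := le_max_right (funA f g x y) (funB g x y)
  exact max_le (by linarith) (by linarith)

lemma funA_le_funAtilde_add_funAtilde_swap :
    funA f g x y ≤ funAtilde f g x y + funAtilde f g y x := by
  rw [funA, funAtilde, funAtilde, norm_sub_rev y x, ← add_div]
  gcongr
  calc |jet f g x x - jet f g y x + jet f g x y - jet f g y y|
      = |(jet f g x x - jet f g y x) - (jet f g y y - jet f g x y)| := by ring_nf
    _ ≤ _ := abs_sub _ _

end Jet

theorem statement6_general {d : ℕ} (E : Set (EuclideanSpace ℝ (Fin d)))
    (hE : E.Finite)
    (f : EuclideanSpace ℝ (Fin d) → ℝ)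
    (g : EuclideanSpace ℝ (Fin d) → EuclideanSpace ℝ (Fin d)) :
    GammaTilde E f g ≤ GammaPrime E f g ∧
      GammaPrime E f g ≤ 2 * GammaTilde E f g := by
  have le_tilde {x y} (hx : x ∈ E) (hy : y ∈ E) (hxy : x ≠ y) :
      funAtilde f g x y ≤ GammaTilde E f g ∧ funB g x y ≤ GammaTilde E f g :=
    max_le_iff.mp <|
      le_pairSup (F := fun x y => max (funAtilde f g x y) (funB g x y)) hE hx hy hxy
  have le_prime {x y} (hx : x ∈ E) (hy : y ∈ E) (hxy : x ≠ y) :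
      max (funA f g x y) (funB g x y) ≤ GammaPrime E f g :=
    le_pairSup (F := fun x y => max (funA f g x y) (funB g x y)) hE hx hy hxy
  have tilde_nonneg : 0 ≤ GammaTilde E f g :=
    pairSup_nonneg fun x _ y _ _ => (funB_nonneg g x y).trans (le_max_right _ _)
  have prime_nonneg : 0 ≤ GammaPrime E f g :=
    pairSup_nonneg fun x _ y _ _ => (funB_nonneg g x y).trans (le_max_right _ _)
  refine ⟨pairSup_le (fun x hx y hy hxy => ?_) prime_nonneg,
    pairSup_le (fun x hx y hy hxy => ?_) (by linarith)⟩
  · exact (max_funAtilde_funB_le_max_funA_funB f g hxy).trans (le_prime hx hy hxy)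
  · have h_xy := le_tilde hx hy hxy
    have h_yx := le_tilde hy hx hxy.symm
    have hA := funA_le_funAtilde_add_funAtilde_swap f g x y
    exact max_le (by linarith) (by linarith)

/-- `Γ̃(P_E) ≤ Γ'(P_E) ≤ 2·Γ̃(P_E)`. -/
theorem statement6 {d : ℕ} (hd : 1 ≤ d) (E : Set (EuclideanSpace ℝ (Fin d)))
    (hE : E.Finite) (h2 : ∃ x ∈ E, ∃ y ∈ E, x ≠ y)
    (f : EuclideanSpace ℝ (Fin d) → ℝ)
    (g : EuclideanSpace ℝ (Fin d) → EuclideanSpace ℝ (Fin d)) :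
    GammaTilde E f g ≤ GammaPrime E f g ∧
      GammaPrime E f g ≤ 2 * GammaTilde E f g :=
  statement6_general E hE f g
end

section
/- Let d ≥ 1, let ε > 0, M ≥ 0, and let x, y, x_T, x_{Λ1}, x_{Λ2} ∈ ℝ^d with x ≠ y, each with assigned values f(·) ∈ ℝ and gradients g(·) ∈ ℝ^d determining affine polynomials. Suppose |P_{x_{Λ2}}(x_{Λ2}) − P_{x_T}(x_{Λ2})| ≤ M·|x_{Λ2} − x_T|², ‖g(x_{Λ2}) − g(x_T)‖ ≤ M·|x_{Λ2} − x_T|, |P_{x_{Λ1}}(x_{Λ1}) − P_{x_{Λ2}}(x_{Λ1})| ≤ M·|x_{Λ1} − x_{Λ2}|², ‖g(x_{Λ1}) − g(x_{Λ2})‖ ≤ M·|x_{Λ1} − x_{Λ2}|, together with the distance bounds |x_T − x_{Λ2}| ≤ ε·|x − y|, |x − x_{Λ2}| ≤ (1 + 2ε)·|x − y|, |x_{Λ2} − x_{Λ1}| ≤ (1 + 2ε)·|x − y|, and |x − x_{Λ1}| ≤ ε·|x − y|. Then |P_{x_T}(x) − P_{x_{Λ1}}(x)| ≤ 2(1 +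 3ε)²·M·|x − y|². -/
open scoped RealInnerProductSpace

lemma jet_diff_le {d : ℕ} (f : EuclideanSpace ℝ (Fin d) → ℝ)
    (g : EuclideanSpace ℝ (Fin d) → EuclideanSpace ℝ (Fin d))
    (u v z : EuclideanSpace ℝ (Fin d)) :
    |jet f g u z - jet f g v z| ≤ |jet f g u u - jet f g v u| + ‖g u - g v‖ * ‖z - u‖ := by
  have hrw : jet f g u z - jet f g v z
      = (jet f g u u - jet f g v u) + ⟪g u - g v, z - u⟫ := by
    simp only [jet, inner_sub_left, inner_sub_right, sub_self, inner_zero_right]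
    ring
  rw [hrw]
  calc |(jet f g u u - jet f g v u) + ⟪g u - g v, z - u⟫|
      ≤ |jet f g u u - jet f g v u| + |⟪g u - g v, z - u⟫| := abs_add_le _ _
    _ ≤ |jet f g u u - jet f g v u| + ‖g u - g v‖ * ‖z - u‖ := by
        gcongr; exact abs_real_inner_le_norm _ _

set_option maxHeartbeats 1000000 in
/-- Estimate (A estimate 4):
`|P_{x_T}(x) - P_{x_{Λ1}}(x)| ≤ 2(1 + 3ε)²·M·|x - y|²`. -/
theorem statement14 {d : ℕ} (hd : 1 ≤ d) (ε M : ℝ) (hε : 0 < ε) (hM : 0 ≤ M)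
    (f : EuclideanSpace ℝ (Fin d) → ℝ)
    (g : EuclideanSpace ℝ (Fin d) → EuclideanSpace ℝ (Fin d))
    (x y xT xL1 xL2 : EuclideanSpace ℝ (Fin d)) (hxy : x ≠ y)
    (h1 : |jet f g xL2 xL2 - jet f g xT xL2| ≤ M * ‖xL2 - xT‖ ^ 2)
    (h2 : ‖g xL2 - g xT‖ ≤ M * ‖xL2 - xT‖)
    (h3 : |jet f g xL1 xL1 - jet f g xL2 xL1| ≤ M * ‖xL1 - xL2‖ ^ 2)
    (h4 : ‖g xL1 - g xL2‖ ≤ M * ‖xL1 - xL2‖)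
    (hd1 : ‖xT - xL2‖ ≤ ε * ‖x - y‖)
    (hd2 : ‖x - xL2‖ ≤ (1 + 2 * ε) * ‖x - y‖)
    (hd3 : ‖xL2 - xL1‖ ≤ (1 + 2 * ε) * ‖x - y‖)
    (hd4 : ‖x - xL1‖ ≤ ε * ‖x - y‖) :
    |jet f g xT x - jet f g xL1 x| ≤ 2 * (1 + 3 * ε) ^ 2 * M * ‖x - y‖ ^ 2 := by
  have hA := jet_diff_le f g xL2 xT x
  have hB := jet_diff_le f g xL1 xL2 x
  have e1 : ‖xL2 - xT‖ = ‖xT - xL2‖ := norm_sub_rev _ _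
  have e2 : ‖xL1 - xL2‖ = ‖xL2 - xL1‖ := norm_sub_rev _ _
  have n1 : (0:ℝ) ≤ ‖xT - xL2‖ := norm_nonneg _
  have n2 : (0:ℝ) ≤ ‖x - xL2‖ := norm_nonneg _
  have n3 : (0:ℝ) ≤ ‖xL2 - xL1‖ := norm_nonneg _
  have n4 : (0:ℝ) ≤ ‖x - xL1‖ := norm_nonneg _
  have nxy : (0:ℝ) ≤ ‖x - y‖ := norm_nonneg _
  have key : |jet f g xT x - jet f g xL1 x|
      ≤ |jet f g xL2 x - jet f g xT x| + |jet f g xL1 x - jet f g xL2 x| := by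
    calc |jet f g xT x - jet f g xL1 x|
        ≤ |jet f g xT x - jet f g xL2 x| + |jet f g xL2 x - jet f g xL1 x| :=
          abs_sub_le _ _ _
      _ = |jet f g xL2 x - jet f g xT x| + |jet f g xL1 x - jet f g xL2 x| := by
          rw [abs_sub_comm (jet f g xT x) (jet f g xL2 x), abs_sub_comm (jet f g xL2 x) (jet f g xL1 x)]
  rw [e1] at h1 h2
  rw [e2] at h3 h4
  have bA : |jet f g xL2 x - jet f g xT x| ≤ M * ‖xT - xL2‖ ^ 2 + M * ‖xT - xL2‖ * ‖x - xL2‖ := by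
    nlinarith [hA, mul_le_mul h2 le_rfl n2 (mul_nonneg hM n1)]
  have bB : |jet f g xL1 x - jet f g xL2 x| ≤ M * ‖xL2 - xL1‖ ^ 2 + M * ‖xL2 - xL1‖ * ‖x - xL1‖ := by
    nlinarith [hB, mul_le_mul h4 le_rfl n4 (mul_nonneg hM n3)]
  set a := ‖xT - xL2‖ with ha
  set b := ‖x - xL2‖ with hb
  set c := ‖xL2 - xL1‖ with hc
  set e := ‖x - xL1‖ with he
  set r := ‖x - y‖ with hr
  have s1 : M * a ^ 2 ≤ M * ((ε * r) * (ε * r)) := by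
    rw [sq]; gcongr
  have s2 : M * a * b ≤ M * ((ε * r) * ((1 + 2 * ε) * r)) := by
    rw [mul_assoc]; gcongr
  have s3 : M * c ^ 2 ≤ M * (((1 + 2 * ε) * r) * ((1 + 2 * ε) * r)) := by
    rw [sq]; gcongr
  have s4 : M * c * e ≤ M * (((1 + 2 * ε) * r) * (ε * r)) := by
    rw [mul_assoc]; gcongr
  have step : M * a ^ 2 + M * a * b + (M * c ^ 2 + M * c * e)
      ≤ (1 + 3 * ε) ^ 2 * M * r ^ 2 := by
    have : M * ((ε * r) * (ε * r)) + M * ((ε * r) * ((1 + 2 * ε) * r))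
        + (M * (((1 + 2 * ε) * r) * ((1 + 2 * ε) * r)) + M * (((1 + 2 * ε) * r) * (ε * r)))
        = (1 + 3 * ε) ^ 2 * M * r ^ 2 := by ring
    linarith
  have fin : (1 + 3 * ε) ^ 2 * M * r ^ 2 ≤ 2 * (1 + 3 * ε) ^ 2 * M * r ^ 2 := by
    have hpos : 0 ≤ (1 + 3 * ε) ^ 2 * M * r ^ 2 := by positivity
    linarith
  linarith [key, bA, bB]
end

section
/- Let d ≥ 1, let 0 < ε ≤ 1, M ≥ 0, and let x, y, x_S, x_T, x_{Λ1}, x_{Λ2} ∈ ℝ^d with x ≠ y, each with assigned values f(·) ∈ ℝ and gradients g(·) ∈ ℝ^d determining affine polynomials. Suppose the jet bounds: |P_x(x) − P_{x_S}(x)| ≤ M·|x − x_S|²; |P_{x_{Λ1}}(x_{Λ1}) − P_{x_S}(x_{Λ1})| ≤ M·|x_{Λ1} − x_S|² and ‖g(x_{Λ1}) − g(x_S)‖ ≤ M·|x_{Λ1} − x_S|; |P_y(y) − P_{x_T}(y)| ≤ M·|y − x_T|² and ‖g(y) − g(x_T)‖ ≤ M·|y − x_T|; |P_{x_{Λ2}}(x_{Λ2})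 − P_{x_T}(x_{Λ2})| ≤ M·|x_{Λ2} − x_T|² and ‖g(x_{Λ2}) − g(x_T)‖ ≤ M·|x_{Λ2} − x_T|; |P_{x_{Λ1}}(x_{Λ1}) − P_{x_{Λ2}}(x_{Λ1})| ≤ M·|x_{Λ1} − x_{Λ2}|² and ‖g(x_{Λ1}) − g(x_{Λ2})‖ ≤ M·|x_{Λ1} − x_{Λ2}|; together with the distance bounds: |x − x_S| ≤ ε·|x − y|, |x_S − x_{Λ1}| ≤ ε·|x − y|, |x − x_{Λ1}| ≤ ε·|x − y|, |y − x_T| ≤ ε·|x − y|, |x_T − x_{Λ2}| ≤ ε·|x − y|, |x − x_{Λ2}| ≤ (1 + 2ε)·|x − y|, and |x_{Λ2} − x_{Λ1}| ≤ (1 + 2ε)·|x − y|. Then |P_x(x) − P_y(x)| ≤ (3 + 15ε + 23ε²)·M·|x − y|². -/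
open scoped RealInnerProductSpace

lemma jet_diff {d : ℕ} (f : EuclideanSpace ℝ (Fin d) → ℝ)
    (g : EuclideanSpace ℝ (Fin d) → EuclideanSpace ℝ (Fin d))
    (u v z : EuclideanSpace ℝ (Fin d)) :
    jet f g u z - jet f g v z = (jet f g u u - jet f g v u) + ⟪g u - g v, z - u⟫ := by
  simp only [jet, inner_sub_left, inner_sub_right, sub_self, inner_zero_right]
  ring

lemma jet_bound {d : ℕ} (M : ℝ)
    (f : EuclideanSpace ℝ (Fin d) → ℝ)
    (g : EuclideanSpace ℝ (Fin d) → EuclideanSpace ℝ (Fin d))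
    (u v z : EuclideanSpace ℝ (Fin d))
    (h : |jet f g u u - jet f g v u| ≤ M * ‖u - v‖ ^ 2)
    (hg : ‖g u - g v‖ ≤ M * ‖u - v‖) :
    |jet f g u z - jet f g v z| ≤ M * ‖u - v‖ ^ 2 + M * ‖u - v‖ * ‖z - u‖ := by
  rw [jet_diff]
  calc |(jet f g u u - jet f g v u) + ⟪g u - g v, z - u⟫|
      ≤ |jet f g u u - jet f g v u| + |⟪g u - g v, z - u⟫| := abs_add_le _ _
    _ ≤ M * ‖u - v‖ ^ 2 + M * ‖u - v‖ * ‖z - u‖ := add_le_add h <| by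
        calc |⟪g u - g v, z - u⟫| ≤ ‖g u - g v‖ * ‖z - u‖ := abs_real_inner_le_norm _ _
          _ ≤ M * ‖u - v‖ * ‖z - u‖ := by gcongr

lemma piece (M a b c e D : ℝ) (hM : 0 ≤ M) (ha : 0 ≤ a) (hb : 0 ≤ b)
    (hc : 0 ≤ c) (he : 0 ≤ e) (hD : 0 ≤ D) (h1 : a ≤ c * D) (h2 : b ≤ e * D) :
    M * a ^ 2 + M * a * b ≤ (c ^ 2 + c * e) * M * D ^ 2 := by
  calc M * a ^ 2 + M * a * b ≤ M * (c * D) ^ 2 + M * (c * D) * (e * D) := by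
        gcongr <;> positivity
    _ = (c ^ 2 + c * e) * M * D ^ 2 := by ring

set_option maxHeartbeats 1000000 in
/-- Combined estimate (A estimate 5):
`|P_x(x) - P_y(x)| ≤ (3 + 15ε + 23ε²)·M·|x - y|²`. -/
theorem statement15 {d : ℕ} (hd : 1 ≤ d) (ε M : ℝ) (hε : 0 < ε) (hε1 : ε ≤ 1)
    (hM : 0 ≤ M)
    (f : EuclideanSpace ℝ (Fin d) → ℝ)
    (g : EuclideanSpace ℝ (Fin d) → EuclideanSpace ℝ (Fin d))
    (x y xS xT xL1 xL2 : EuclideanSpace ℝ (Fin d)) (hxy : x ≠ y)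
    (h1 : |jet f g x x - jet f g xS x| ≤ M * ‖x - xS‖ ^ 2)
    (h2 : |jet f g xL1 xL1 - jet f g xS xL1| ≤ M * ‖xL1 - xS‖ ^ 2)
    (h3 : ‖g xL1 - g xS‖ ≤ M * ‖xL1 - xS‖)
    (h4 : |jet f g y y - jet f g xT y| ≤ M * ‖y - xT‖ ^ 2)
    (h5 : ‖g y - g xT‖ ≤ M * ‖y - xT‖)
    (h6 : |jet f g xL2 xL2 - jet f g xT xL2| ≤ M * ‖xL2 - xT‖ ^ 2)
    (h7 : ‖g xL2 - g xT‖ ≤ M * ‖xL2 - xT‖)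
    (h8 : |jet f g xL1 xL1 - jet f g xL2 xL1| ≤ M * ‖xL1 - xL2‖ ^ 2)
    (h9 : ‖g xL1 - g xL2‖ ≤ M * ‖xL1 - xL2‖)
    (hd1 : ‖x - xS‖ ≤ ε * ‖x - y‖)
    (hd2 : ‖xS - xL1‖ ≤ ε * ‖x - y‖)
    (hd3 : ‖x - xL1‖ ≤ ε * ‖x - y‖)
    (hd4 : ‖y - xT‖ ≤ ε * ‖x - y‖)
    (hd5 : ‖xT - xL2‖ ≤ ε * ‖x - y‖)
    (hd6 : ‖x - xL2‖ ≤ (1 + 2 * ε) * ‖x - y‖)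
    (hd7 : ‖xL2 - xL1‖ ≤ (1 + 2 * ε) * ‖x - y‖) :
    |jet f g x x - jet f g y x| ≤
      (3 + 15 * ε + 23 * ε ^ 2) * M * ‖x - y‖ ^ 2 := by
  have key : jet f g x x - jet f g y x =
      (jet f g x x - jet f g xS x) - (jet f g xL1 x - jet f g xS x)
      + (jet f g xL1 x - jet f g xL2 x) + (jet f g xL2 x - jet f g xT x)
      - (jet f g y x - jet f g xT x) := by ring
  have D0 : (0:ℝ) ≤ ‖x - y‖ := norm_nonneg _
  have b2 := jet_bound M f g xL1 xS x h2 h3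
  have b4 := jet_bound M f g y xT x h4 h5
  have b6 := jet_bound M f g xL2 xT x h6 h7
  have b8 := jet_bound M f g xL1 xL2 x h8 h9
  have habs : |jet f g x x - jet f g y x| ≤
      |jet f g x x - jet f g xS x| + |jet f g xL1 x - jet f g xS x|
      + |jet f g xL1 x - jet f g xL2 x| + |jet f g xL2 x - jet f g xT x|
      + |jet f g y x - jet f g xT x| := by
    rw [key]
    set A := jet f g x x - jet f g xS x
    set B := jet f g xL1 x - jet f g xS x
    set C := jet f g xL1 x - jet f g xL2 x
    set E := jet f g xL2 x - jet f g xT x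
    set F := jet f g y x - jet f g xT x
    calc |A - B + C + E - F| ≤ |A - B + C + E| + |F| := abs_sub _ _
      _ ≤ (|A - B + C| + |E|) + |F| := by gcongr ?_ + _; exact abs_add_le _ _
      _ ≤ ((|A - B| + |C|) + |E|) + |F| := by gcongr ?_ + _ + _; exact abs_add_le _ _
      _ ≤ (((|A| + |B|) + |C|) + |E|) + |F| := by gcongr ?_ + _ + _ + _; exact abs_sub _ _
      _ = |A| + |B| + |C| + |E| + |F| := by ring
  have hL1S : ‖xL1 - xS‖ ≤ ε * ‖x - y‖ := by rw [norm_sub_rev]; exact hd2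
  have hL1L2 : ‖xL1 - xL2‖ ≤ (1 + 2 * ε) * ‖x - y‖ := by rw [norm_sub_rev]; exact hd7
  have hL2T : ‖xL2 - xT‖ ≤ ε * ‖x - y‖ := by rw [norm_sub_rev]; exact hd5
  have hε' : (0:ℝ) ≤ ε := le_of_lt hε
  have h2ε : (0:ℝ) ≤ 1 + 2 * ε := by linarith
  have c2 : M * ‖xL1 - xS‖ ^ 2 + M * ‖xL1 - xS‖ * ‖x - xL1‖ ≤
      (ε^2 + ε*ε) * M * ‖x - y‖^2 :=
    piece M _ _ _ _ _ hM (norm_nonneg _) (norm_nonneg _) hε' hε' D0 hL1S hd3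
  have c8 : M * ‖xL1 - xL2‖ ^ 2 + M * ‖xL1 - xL2‖ * ‖x - xL1‖ ≤
      ((1+2*ε)^2 + (1+2*ε)*ε) * M * ‖x - y‖^2 :=
    piece M _ _ _ _ _ hM (norm_nonneg _) (norm_nonneg _) h2ε hε' D0 hL1L2 hd3
  have c6 : M * ‖xL2 - xT‖ ^ 2 + M * ‖xL2 - xT‖ * ‖x - xL2‖ ≤
      (ε^2 + ε*(1+2*ε)) * M * ‖x - y‖^2 :=
    piece M _ _ _ _ _ hM (norm_nonneg _) (norm_nonneg _) hε' h2ε D0 hL2T hd6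
  have c4 : M * ‖y - xT‖ ^ 2 + M * ‖y - xT‖ * ‖x - y‖ ≤
      (ε^2 + ε*1) * M * ‖x - y‖^2 :=
    piece M _ _ _ _ _ hM (norm_nonneg _) (norm_nonneg _) hε' zero_le_one D0 hd4
      (by rw [one_mul])
  have c1 : M * ‖x - xS‖ ^ 2 ≤ ε^2 * M * ‖x - y‖^2 := by
    calc M * ‖x - xS‖ ^ 2 ≤ M * (ε * ‖x - y‖) ^ 2 := by gcongr
      _ = ε^2 * M * ‖x - y‖^2 := by ring
  calc |jet f g x x - jet f g y x| ≤ _ := habs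
    _ ≤ ε^2 * M * ‖x - y‖^2 + (ε^2 + ε*ε) * M * ‖x - y‖^2
        + ((1+2*ε)^2 + (1+2*ε)*ε) * M * ‖x - y‖^2
        + (ε^2 + ε*(1+2*ε)) * M * ‖x - y‖^2
        + (ε^2 + ε*1) * M * ‖x - y‖^2 := by
      gcongr ?_ + ?_ + ?_ + ?_ + ?_
      · exact le_trans h1 c1
      · exact le_trans b2 c2
      · exact le_trans b8 c8
      · exact le_trans b6 c6
      · exact le_trans b4 c4
    _ = (1 + 7*ε + 13*ε^2) * M * ‖x - y‖^2 := by ring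
    _ ≤ (3 + 15 * ε + 23 * ε ^ 2) * M * ‖x - y‖^2 := by
      have hco : (1 + 7*ε + 13*ε^2) ≤ 3 + 15 * ε + 23 * ε ^ 2 := by nlinarith
      have h2' : (0:ℝ) ≤ M * ‖x - y‖^2 := mul_nonneg hM (sq_nonneg _)
      calc (1 + 7*ε + 13*ε^2) * M * ‖x - y‖^2
          = (1 + 7*ε + 13*ε^2) * (M * ‖x - y‖^2) := by ring
        _ ≤ (3 + 15 * ε + 23 * ε ^ 2) * (M * ‖x - y‖^2) :=
            mul_le_mul_of_nonneg_right hco h2'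
        _ = (3 + 15 * ε + 23 * ε ^ 2) * M * ‖x - y‖^2 := by ring
end
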